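/- Let M be a natural number with M > 1 and let m be a natural number with m > 2. If ∏_{j=1}^{m-1} (M^j + 1) ≡ 1 (mod (M^m − 1)/(M − 1)), then m is prime. -/

import Mathlib

/-!
If `m` is even, `M + 1` divides both `(M^m - 1)/(M - 1)` and the product, which therefore
cannot be `1` modulo it. If `m = p e` is odd and composite, with `p` its least prime factor,
work modulo `n = |Φ_e(M)|`, a divisor of `(M^m - 1)/(M - 1)`. There `M^e = 1` and
`∏_{0<k<e} (M^k + 1) = 1`, because `∏_{0<k<e} (1 + ζ^k) = 1` for a primitive `e`-th root of
unity `ζ` when `e` is odd. Cutting the product into blocks of length `e` turns the congruence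
into `2^(p-1) ≡ 1 (mod n)`, which is impossible: for `M ≥ 3` because
`n > (M-1)^φ(e) ≥ 2^(p-1)`, and for `M = 2` because `n` also divides `2^e - 1` while
`gcd(e, p-1) = 1`.
-/

open Finset Polynomial

theorem IsPrimitiveRoot.prod_pow_add_one_eq_one {R : Type*} [CommRing R] [IsDomain R] {ζ : R}
    {e : ℕ} (hζ : IsPrimitiveRoot ζ e) (he : Odd e) : ∏ k ∈ Ico 1 e, (ζ ^ k + 1) = 1 := by
  obtain ⟨n, rfl⟩ : ∃ n, e = n + 1 := ⟨e - 1, by have := he.pos; omega⟩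
  -- `(ζ^k + 1)(1 - ζ^k) = 1 - (ζ^2)^k`, and both `ζ` and `ζ^2` give `∏ (1 - ·) = e`.
  have hζ2 : IsPrimitiveRoot (ζ ^ 2) (n + 1) := hζ.pow_of_coprime 2 (Nat.coprime_two_left.2 he)
  have hne : ∏ k ∈ range n, (1 - ζ ^ (k + 1)) ≠ 0 :=
    prod_ne_zero_iff.2 fun k hk ↦ sub_ne_zero.2
      (hζ.pow_ne_one_of_pos_of_lt k.succ_ne_zero (by simpa using hk)).symm
  rw [prod_Ico_eq_prod_range, Nat.add_sub_cancel]
  refine mul_right_cancel₀ hne ?_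
  calc (∏ k ∈ range n, (ζ ^ (1 + k) + 1)) * ∏ k ∈ range n, (1 - ζ ^ (k + 1))
      = ∏ k ∈ range n, (1 - (ζ ^ 2) ^ (k + 1)) := by
        rw [← prod_mul_distrib]
        exact prod_congr rfl fun k _ ↦ by ring
    _ = 1 * ∏ k ∈ range n, (1 - ζ ^ (k + 1)) := by
        rw [hζ2.prod_one_sub_pow_eq_order, hζ.prod_one_sub_pow_eq_order, one_mul]

theorem Polynomial.cyclotomic_dvd_prod_X_pow_add_one_sub_one {e : ℕ} (he : Odd e) :
    cyclotomic e ℤ ∣ ∏ k ∈ Ico 1 e, (X ^ k + 1) - 1 := by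
  have hζ := Complex.isPrimitiveRoot_exp e he.pos.ne'
  rw [cyclotomic_eq_minpoly hζ he.pos]
  apply minpoly.isIntegrallyClosed_dvd (hζ.isIntegral he.pos)
  simp [hζ.prod_pow_add_one_eq_one he]

namespace Function.Periodic

variable {M : Type*} [CommMonoid M] {f : ℕ → M} {e : ℕ}

theorem prod_range_mul (hf : Periodic f e) (c : ℕ) :
    ∏ i ∈ range (c * e), f i = (∏ i ∈ range e, f i) ^ c := by
  induction c with
  | zero => simp
  | succ c ih =>
    rw [Nat.succ_mul, prod_range_add, ih, pow_succ]
    exact congrArg _ (prod_congr rfl fun i _ ↦ by simpa [add_comm] using hf.nat_mul c i)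

theorem prod_Ico_one_succ_mul (hf : Periodic f e) (c : ℕ) :
    ∏ i ∈ Ico 1 ((c + 1) * e), f i =
      (∏ i ∈ Ico 1 e, f i) * (∏ i ∈ range e, f i) ^ c := by
  rcases e.eq_zero_or_pos with rfl | he
  · simp
  rw [← prod_Ico_consecutive _ he (Nat.le_mul_of_pos_left e c.succ_pos), ← hf.prod_range_mul c]
  refine congrArg _ ?_
  rw [prod_Ico_eq_prod_range, Nat.succ_mul, Nat.add_sub_cancel_right]
  exact prod_congr rfl fun i _ ↦ by rw [add_comm, hf i]

end Function.Periodic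

theorem two_pow_eq_one_of_isRoot_cyclotomic {R : Type*} [CommRing R] {x : R} {e c : ℕ}
    (he : Odd e) (hx : (cyclotomic e R).IsRoot x)
    (h : ∏ j ∈ Ico 1 ((c + 1) * e), (x ^ j + 1) = 1) : (2 : R) ^ c = 1 := by
  have hxe : x ^ e = 1 := by
    simpa [sub_eq_zero, hx.eq_zero] using eval_dvd (x := x) (cyclotomic.dvd_X_pow_sub_one e R)
  have hblock : ∏ k ∈ Ico 1 e, (x ^ k + 1) = 1 := by
    have := eval_dvd (x := x) (map_dvd (mapRingHom (Int.castRingHom R))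
      (cyclotomic_dvd_prod_X_pow_add_one_sub_one he))
    simpa [sub_eq_zero, hx.eq_zero, Polynomial.map_prod, eval_prod] using this
  have hper : Function.Periodic (fun j ↦ x ^ j + 1) e := fun j ↦ by simp [pow_add, hxe]
  rwa [hper.prod_Ico_one_succ_mul, prod_range_eq_mul_Ico _ he.pos, hblock, pow_zero,
    one_add_one_eq_two, mul_one, one_mul] at h

theorem Polynomial.isRoot_cyclotomic_zmod_of_dvd_eval {n e M : ℕ}
    (h : (n : ℤ) ∣ (cyclotomic e ℤ).eval (M : ℤ)) : (cyclotomic e (ZMod n)).IsRoot M := by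
  rwa [IsRoot, ← map_cyclotomic_int, eval_natCast_map, eq_intCast,
    ZMod.intCast_zmod_eq_zero_iff_dvd]

theorem natAbs_cyclotomic_eval_dvd_two_pow_sub_one_of_modEq {M e c : ℕ} (he : Odd e)
    (he1 : e ≠ 1) (h : ∏ j ∈ Ico 1 ((c + 1) * e), (M ^ j + 1) ≡ 1
      [MOD ∑ i ∈ range ((c + 1) * e), M ^ i]) :
    ((cyclotomic e ℤ).eval (M : ℤ)).natAbs ∣ 2 ^ c - 1 := by
  set n := ((cyclotomic e ℤ).eval (M : ℤ)).natAbs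
  have hroot := isRoot_cyclotomic_zmod_of_dvd_eval (n := n) (Int.natAbs_dvd.2 dvd_rfl)
  have hsum : n ∣ ∑ i ∈ range ((c + 1) * e), M ^ i := by
    rw [← ZMod.natCast_eq_zero_iff]
    push_cast
    simpa [hroot.eq_zero, eval_finsetSum, zero_dvd_iff] using eval_dvd (x := (M : ZMod n))
      (cyclotomic_dvd_geom_sum_of_dvd (ZMod n) (dvd_mul_left e _) he1)
  have hprod := (ZMod.natCast_eq_natCast_iff _ _ _).2 (h.of_dvd hsum)
  push_cast at hprod
  have h2 := two_pow_eq_one_of_isRoot_cyclotomic he hroot hprod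
  refine (Nat.modEq_iff_dvd' Nat.one_le_two_pow).1 ((ZMod.natCast_eq_natCast_iff _ _ _).1 ?_).symm
  push_cast
  exact h2

theorem Nat.coprime_minFac_sub_one (m : ℕ) : Nat.Coprime (m.minFac - 1) m := by
  refine Nat.coprime_of_dvd fun k hk hkp hkm ↦ ?_
  have hle := Nat.minFac_le_of_dvd hk.two_le hkm
  rcases Nat.eq_zero_or_pos (m.minFac - 1) with h0 | hpos
  · have : m = 1 := Nat.minFac_eq_one_iff.1 (by have := m.minFac_pos; omega)
    exact hk.one_lt.ne' (Nat.dvd_one.1 (this ▸ hkm))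
  · have := Nat.le_of_dvd hpos hkp
    omega

theorem Nat.minFac_sub_one_le_totient_of_dvd {d m : ℕ} (hdm : d ∣ m) (hd : 1 < d) :
    m.minFac - 1 ≤ d.totient := by
  have hq := Nat.minFac_prime hd.ne'
  have hmq : m.minFac ≤ d.minFac := Nat.minFac_le_of_dvd hq.two_le (d.minFac_dvd.trans hdm)
  have := Nat.le_of_dvd (Nat.totient_pos.2 (by omega)) (Nat.totient_dvd_of_dvd d.minFac_dvd)
  rw [Nat.totient_prime hq] at this
  omega

theorem natAbs_cyclotomic_eval_dvd_pow_sub_one {M : ℕ} (hM : 0 < M) (e : ℕ) :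
    ((cyclotomic e ℤ).eval (M : ℤ)).natAbs ∣ M ^ e - 1 := by
  rw [← Int.natCast_dvd_natCast, Nat.cast_sub (Nat.one_le_pow _ _ hM), Int.natAbs_dvd]
  simpa using eval_dvd (x := (M : ℤ)) (cyclotomic.dvd_X_pow_sub_one e ℤ)

theorem natAbs_cyclotomic_eval_not_dvd_two_pow_sub_one {M e k : ℕ} (hM : 1 < M) (he : 1 < e)
    (hk : k ≤ e.totient) (hke : Nat.Coprime k e) :
    ¬((cyclotomic e ℤ).eval (M : ℤ)).natAbs ∣ 2 ^ k - 1 := by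
  set n := ((cyclotomic e ℤ).eval (M : ℤ)).natAbs
  intro hn
  have hk0 : k ≠ 0 := by rintro rfl; simp at hke; omega
  obtain rfl | hM3 : M = 2 ∨ 3 ≤ M := by omega
  · have hn1 : 1 < n := sub_one_lt_natAbs_cyclotomic_eval he hM.ne'
    have := Nat.dvd_gcd (natAbs_cyclotomic_eval_dvd_pow_sub_one two_pos e) hn
    rw [Nat.pow_sub_one_gcd_pow_sub_one, hke.symm] at this
    exact absurd (Nat.le_of_dvd one_pos this) (by omega)
  · have hlt := sub_one_pow_totient_lt_natAbs_cyclotomic_eval he hM.ne'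
    have := Nat.le_of_dvd (by have := Nat.one_lt_two_pow hk0; omega) hn
    have : 2 ^ k ≤ (M - 1) ^ e.totient :=
      (Nat.pow_le_pow_right two_pos hk).trans (Nat.pow_le_pow_left (by omega) _)
    omega

theorem prod_pow_add_one_not_modEq_one_of_even {M m : ℕ} (hM : 0 < M) (hm : Even m)
    (hm0 : m ≠ 0) : ¬∏ j ∈ Ico 1 m, (M ^ j + 1) ≡ 1 [MOD ∑ i ∈ range m, M ^ i] := by
  intro h
  have : Fact (1 < M + 1) := ⟨by omega⟩
  have hM1 : (M : ZMod (M + 1)) = -1 :=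
    eq_neg_of_add_eq_zero_left (by exact_mod_cast ZMod.natCast_self (M + 1))
  have hsum : M + 1 ∣ ∑ i ∈ range m, M ^ i := by
    rw [← ZMod.natCast_eq_zero_iff]
    push_cast
    rw [hM1, neg_one_geom_sum, if_pos hm]
  have hprod := (ZMod.natCast_eq_natCast_iff _ _ _).2 (h.of_dvd hsum)
  push_cast at hprod
  rw [prod_eq_zero (i := 1) (by obtain ⟨k, rfl⟩ := hm; simp; omega) (by simp [hM1])] at hprod
  exact zero_ne_one hprod

theorem prime_of_prod_pow_add_one_modEq (M m : ℕ) (hM : 1 < M) (hm : 2 < m)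
    (h : (∏ j ∈ Finset.Icc 1 (m - 1), (M ^ j + 1)) ≡ 1 [MOD (M ^ m - 1) / (M - 1)]) :
    m.Prime := by
  rw [← Nat.geomSum_eq hM, Icc_sub_one_right_eq_Ico_of_not_isMin (by simp; omega)] at h
  by_contra hnp
  rcases Nat.even_or_odd m with hme | hmo
  · exact prod_pow_add_one_not_modEq_one_of_even (by omega) hme (by omega) h
  obtain ⟨e, hpe⟩ := m.minFac_dvd
  have hem : e ∣ m := Dvd.intro_left _ hpe.symm
  have he1 : 1 < e := by
    refine (lt_mul_iff_one_lt_right m.minFac_pos).1 ?_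
    rw [← hpe]
    exact (Nat.not_prime_iff_minFac_lt (by omega)).1 hnp
  rw [hpe, ← Nat.sub_add_cancel m.minFac_pos] at h
  exact natAbs_cyclotomic_eval_not_dvd_two_pow_sub_one hM he1
    (Nat.minFac_sub_one_le_totient_of_dvd hem he1)
    ((Nat.coprime_minFac_sub_one m).coprime_dvd_right hem)
    (natAbs_cyclotomic_eval_dvd_two_pow_sub_one_of_modEq (hmo.of_dvd_nat hem) he1.ne' h)
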